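/- Suppose S has γ-rectangular Apéry set (Ap(S) = Γ). Then every representation ω = Σ_{i=2}^ν λ_i g_i of an element ω ∈ Ap(S) with λ_i ≤ γ_i for all i is a maximal representation. -/

import Mathlib

open Finset

/-- `S` is a numerical semigroup: a submonoid of `(ℕ, +)` with finite complement. -/
def IsNumSgp (S : Set ℕ) : Prop :=
  0 ∈ S ∧ (∀ a ∈ S, ∀ b ∈ S, a + b ∈ S) ∧ (Sᶜ : Set ℕ).Finite

/-- `s` belongs to the Apéry set of `S` with respect to `m`:
`s ∈ S` and `s - m ∉ S` (i.e. no `u ∈ S` with `u + m = s`). -/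
def InApery (S : Set ℕ) (m s : ℕ) : Prop :=
  s ∈ S ∧ ∀ u ∈ S, u + m ≠ s

def AperySet (S : Set ℕ) (m : ℕ) : Set ℕ := {s | InApery S m s}

/-- `ordS S s` is the largest `h` such that `s` is a sum of `h` nonzero elements of `S`. -/
noncomputable def ordS (S : Set ℕ) (s : ℕ) : ℕ :=
  sSup {h : ℕ | ∃ f : Fin h → ℕ, (∀ j, f j ∈ S ∧ f j ≠ 0) ∧ ∑ j, f j = s}

/-- `g` generates `S`. -/
def Generates (S : Set ℕ) {ν : ℕ} (g : Fin ν → ℕ) : Prop :=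
  ∀ s, s ∈ S ↔ ∃ lam : Fin ν → ℕ, ∑ i, lam i * g i = s

/-- `g` is a minimal generating system of `S`: it generates `S`
and no `g i` is generated by the remaining generators. -/
def MinimalGen (S : Set ℕ) {ν : ℕ} (g : Fin ν → ℕ) : Prop :=
  Generates S g ∧ ∀ i, ¬ ∃ lam : Fin ν → ℕ, lam i = 0 ∧ ∑ j, lam j * g j = g i

/-- `lam` is a maximal representation of `s`: the coefficient sum equals `ordS S s`. -/
def IsMaxRep (S : Set ℕ) {ν : ℕ} (g : Fin ν → ℕ) (lam : Fin ν → ℕ) (s : ℕ) : Prop :=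
  ∑ i, lam i * g i = s ∧ ∑ i, lam i = ordS S s

/-- `s` has a unique maximal representation. -/
def UniqueMaxRep (S : Set ℕ) {ν : ℕ} (g : Fin ν → ℕ) (s : ℕ) : Prop :=
  ∃! lam : Fin ν → ℕ, IsMaxRep S g lam s

/-- `β_i = max {h | h g_i ∈ Ap(S) and ord(h g_i) = h}`. -/
noncomputable def betaN (S : Set ℕ) (m : ℕ) {ν : ℕ} (g : Fin ν → ℕ) (i : Fin ν) : ℕ :=
  sSup {h : ℕ | InApery S m (h * g i) ∧ ordS S (h * g i) = h}

/-- `γ_i = max {h | h g_i ∈ Ap(S), ord(h g_i) = h and h g_i has a unique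
maximal representation}`. -/
noncomputable def gammaN (S : Set ℕ) (m : ℕ) {ν : ℕ} (g : Fin ν → ℕ) (i : Fin ν) : ℕ :=
  sSup {h : ℕ | InApery S m (h * g i) ∧ ordS S (h * g i) = h ∧ UniqueMaxRep S g (h * g i)}

/-- `B = {Σ_{i≥2} λ_i g_i : 0 ≤ λ_i ≤ β_i}`. -/
def Bset (S : Set ℕ) (m : ℕ) {ν : ℕ} [NeZero ν] (g : Fin ν → ℕ) : Set ℕ :=
  {s | ∃ lam : Fin ν → ℕ, lam 0 = 0 ∧ (∀ i, lam i ≤ betaN S m g i) ∧ ∑ i, lam i * g i = s}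

/-- `Γ = {Σ_{i≥2} λ_i g_i : 0 ≤ λ_i ≤ γ_i}`. -/
def GammaSet (S : Set ℕ) (m : ℕ) {ν : ℕ} [NeZero ν] (g : Fin ν → ℕ) : Set ℕ :=
  {s | ∃ lam : Fin ν → ℕ, lam 0 = 0 ∧ (∀ i, lam i ≤ gammaN S m g i) ∧ ∑ i, lam i * g i = s}

/-- `s ⪯_M t`. -/
def predM (S : Set ℕ) (s t : ℕ) : Prop :=
  ∃ u ∈ S, s + u = t ∧ ordS S s + ordS S u = ordS S t

/-!
Let `M = ∑ γ_i g_i`, which lies in `Ap(S)` because the Apéry set is γ-rectangular. Among all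
representations of `M` pick one, `μ`, of maximal length and, among those, with maximal
`∑ μ_i g_i²`. Each `μ_k g_k` is then a summand of `M` in `S`, so it lies in `Ap(S)`; the
maximality of `μ` passes to the summand `μ_k e_k`, which gives `ord(μ_k g_k) = μ_k`, and since
`∑ σ_i g_i² > μ_k g_k²` for every other representation `σ` of `μ_k g_k` of length `μ_k`
(a variance argument), `μ_k e_k` is its unique maximal representation. Hence `μ_k ≤ γ_k`, and
every representation of `M` has length at most `∑ γ_i`. Padding a representation of `ω` by
`γ - λ` turns it into one of `M`, so no representation of `ω` is longer than `λ`.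
-/

section LexMaxRep

variable {ι : Type*} [Fintype ι] (g : ι → ℕ)

def lexWeight (μ : ι → ℕ) : ℕ ×ₗ ℕ := toLex (∑ i, μ i, μ ⬝ᵥ fun i => g i ^ 2)

lemma lexWeight_add (μ τ : ι → ℕ) : lexWeight g (μ + τ) = lexWeight g μ + lexWeight g τ := by
  simp only [lexWeight, Pi.add_apply, sum_add_distrib, add_dotProduct, ← toLex_add,
    Prod.mk_add_mk]

def IsLexMaxRep (n : ℕ) (μ : ι → ℕ) : Prop :=
  μ ⬝ᵥ g = n ∧ ∀ τ : ι → ℕ, τ ⬝ᵥ g = n → lexWeight g τ ≤ lexWeight g μ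

variable {g}

lemma finite_setOf_dotProduct_eq (hg : ∀ i, 0 < g i) (n : ℕ) :
    {μ : ι → ℕ | μ ⬝ᵥ g = n}.Finite := by
  refine (Set.Finite.pi' fun _ => Set.finite_Iic n).subset fun μ hμ i => ?_
  calc μ i ≤ μ i * g i := Nat.le_mul_of_pos_right _ (hg i)
    _ ≤ μ ⬝ᵥ g := single_le_sum (f := fun i => μ i * g i) (fun _ _ => Nat.zero_le _) (mem_univ i)
    _ = n := hμ

lemma exists_isLexMaxRep (hg : ∀ i, 0 < g i) (lam : ι → ℕ) :
    ∃ μ, IsLexMaxRep g (lam ⬝ᵥ g) μ := by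
  obtain ⟨μ, hμ, hmax⟩ :=
    Set.exists_max_image _ (lexWeight g) (finite_setOf_dotProduct_eq hg _) ⟨lam, rfl⟩
  exact ⟨μ, hμ, hmax⟩

lemma IsLexMaxRep.sum_le {n : ℕ} {μ τ : ι → ℕ} (hμ : IsLexMaxRep g n μ) (hτ : τ ⬝ᵥ g = n) :
    ∑ i, τ i ≤ ∑ i, μ i := by
  rcases Prod.Lex.toLex_le_toLex.1 (hμ.2 τ hτ) with hlt | ⟨heq, _⟩
  exacts [hlt.le, heq.le]

lemma IsLexMaxRep.of_add {n : ℕ} {μ τ : ι → ℕ} (h : IsLexMaxRep g n (μ + τ)) :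
    IsLexMaxRep g (τ ⬝ᵥ g) τ := by
  refine ⟨rfl, fun τ' hτ' => ?_⟩
  have hle := h.2 (μ + τ') (by rw [add_dotProduct, hτ', ← add_dotProduct, h.1])
  rw [lexWeight_add, lexWeight_add] at hle
  exact le_of_add_le_add_left hle

lemma mul_sq_lt_dotProduct_sq [DecidableEq ι] (hg : Function.Injective g) {k : ι} {h : ℕ}
    {σ : ι → ℕ} (hσg : σ ⬝ᵥ g = h * g k) (hσ : ∑ i, σ i = h) (hne : σ ≠ Pi.single k h) :
    h * g k ^ 2 < σ ⬝ᵥ fun i => g i ^ 2 := by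
  obtain ⟨j, hjk, hj⟩ : ∃ j, j ≠ k ∧ σ j ≠ 0 := by
    by_contra! hzero
    refine hne (funext fun i => ?_)
    rcases eq_or_ne i k with rfl | hik
    · rw [Pi.single_eq_same, ← hσ, sum_eq_single i (fun j _ hji => hzero j hji) (by simp)]
    · rw [Pi.single_eq_of_ne hik, hzero i hik]
  -- `∑ σ_i (g_i - g_k)²` expands to `∑ σ_i g_i² - h g_k²` and has a positive term at `j`
  have hvar : ∑ i, (σ i : ℤ) * ((g i : ℤ) - g k) ^ 2
      = ∑ i, (σ i : ℤ) * (g i : ℤ) ^ 2 - 2 * g k * ∑ i, (σ i : ℤ) * g i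
        + (g k : ℤ) ^ 2 * ∑ i, (σ i : ℤ) := by
    rw [mul_sum, mul_sum, ← sum_sub_distrib, ← sum_add_distrib]
    exact sum_congr rfl fun i _ => by ring
  have hpos : (1 : ℤ) ≤ σ j * ((g j : ℤ) - g k) ^ 2 := by
    have hσj : (1 : ℤ) ≤ σ j := by exact_mod_cast Nat.one_le_iff_ne_zero.2 hj
    have hgjk : (g j : ℤ) - g k ≠ 0 := sub_ne_zero.2 (by exact_mod_cast hg.ne hjk)
    have hsq : (1 : ℤ) ≤ ((g j : ℤ) - g k) ^ 2 := by
      rcases hgjk.lt_or_gt with hlt | hlt <;> nlinarith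
    nlinarith
  have hterm := single_le_sum (f := fun i => (σ i : ℤ) * ((g i : ℤ) - g k) ^ 2)
    (fun i _ => by positivity) (mem_univ j)
  have hσg' : ∑ i, (σ i : ℤ) * g i = h * g k := by exact_mod_cast hσg
  have hσ' : ∑ i, (σ i : ℤ) = h := by exact_mod_cast hσ
  simp only [dotProduct]
  zify
  rw [hvar, hσg', hσ'] at hterm
  linarith

end LexMaxRep

section Length

variable {S : Set ℕ}

def lengthSet (S : Set ℕ) (s : ℕ) : Set ℕ :=
  {h : ℕ | ∃ f : Fin h → ℕ, (∀ j, f j ∈ S ∧ f j ≠ 0) ∧ ∑ j, f j = s}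

lemma ordS_eq_sSup_lengthSet (s : ℕ) : ordS S s = sSup (lengthSet S s) := rfl

lemma le_of_mem_lengthSet {h s : ℕ} (hh : h ∈ lengthSet S s) : h ≤ s := by
  obtain ⟨f, hf, rfl⟩ := hh
  calc h = ∑ _j : Fin h, 1 := by simp
    _ ≤ ∑ j, f j := sum_le_sum fun j _ => Nat.one_le_iff_ne_zero.2 (hf j).2

lemma add_mem_lengthSet {a b s t : ℕ} (ha : a ∈ lengthSet S s) (hb : b ∈ lengthSet S t) :
    a + b ∈ lengthSet S (s + t) := by
  obtain ⟨f₁, hf₁, rfl⟩ := ha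
  obtain ⟨f₂, hf₂, rfl⟩ := hb
  refine ⟨Fin.addCases f₁ f₂, fun j => ?_, by simp [Fin.sum_univ_add]⟩
  induction j using Fin.addCases with
  | left i => simpa using hf₁ i
  | right i => simpa using hf₂ i

lemma sum_mem_lengthSet {α : Type*} (t : Finset α) (a b : α → ℕ)
    (h : ∀ x ∈ t, a x ∈ lengthSet S (b x)) : ∑ x ∈ t, a x ∈ lengthSet S (∑ x ∈ t, b x) := by
  induction t using Finset.cons_induction with
  | empty =>
    rw [sum_empty, sum_empty]
    exact ⟨Fin.elim0, fun j => j.elim0, rfl⟩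
  | cons x t hx ih =>
    rw [sum_cons, sum_cons]
    exact add_mem_lengthSet (h x (mem_cons_self x t))
      (ih fun y hy => h y (mem_cons_of_mem hy))

lemma dotProduct_mem_lengthSet {ι : Type*} [Fintype ι] {g : ι → ℕ} (hgS : ∀ i, g i ∈ S)
    (hg : ∀ i, 0 < g i) (lam : ι → ℕ) : ∑ i, lam i ∈ lengthSet S (lam ⬝ᵥ g) := by
  refine sum_mem_lengthSet univ _ _ fun i _ => ?_
  have hgi : 1 ∈ lengthSet S (g i) := ⟨fun _ => g i, fun _ => ⟨hgS i, (hg i).ne'⟩, by simp⟩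
  simpa using sum_mem_lengthSet (range (lam i)) (fun _ => 1) (fun _ => g i) fun _ _ => hgi

end Length

section Generators

variable {S : Set ℕ} {ν : ℕ} {g : Fin ν → ℕ}

lemma Generates.mem (hgen : Generates S g) (lam : Fin ν → ℕ) : lam ⬝ᵥ g ∈ S :=
  (hgen _).2 ⟨lam, rfl⟩

lemma Generates.apply_mem (hgen : Generates S g) (i : Fin ν) : g i ∈ S := by
  simpa using hgen.mem (Pi.single i 1)

lemma MinimalGen.pos (hgen : MinimalGen S g) (i : Fin ν) : 0 < g i :=
  Nat.pos_of_ne_zero fun h => hgen.2 i ⟨0, rfl, by simp [h]⟩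

lemma MinimalGen.injective (hgen : MinimalGen S g) : Function.Injective g := by
  intro i j hij
  by_contra hne
  refine hgen.2 i ⟨Pi.single j 1, Pi.single_eq_of_ne hne 1, ?_⟩
  rw [hij]
  exact (single_dotProduct g 1 j).trans (one_mul _)

lemma Generates.exists_rep_of_mem_lengthSet (hgen : Generates S g) {h s : ℕ}
    (hh : h ∈ lengthSet S s) : ∃ ρ : Fin ν → ℕ, ρ ⬝ᵥ g = s ∧ h ≤ ∑ i, ρ i := by
  obtain ⟨f, hf, rfl⟩ := hh
  choose c hc using fun j => (hgen (f j)).1 (hf j).1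
  refine ⟨∑ j, c j, ?_, ?_⟩
  · rw [sum_dotProduct]
    exact sum_congr rfl fun j _ => hc j
  · have hc0 : ∀ j, ∑ i, c j i ≠ 0 := fun j hz => (hf j).2 <| by
      rw [← hc j]
      exact sum_eq_zero fun i hi => by rw [sum_eq_zero_iff.1 hz i hi, zero_mul]
    calc h = ∑ _j : Fin h, 1 := by simp
      _ ≤ ∑ j, ∑ i, c j i := sum_le_sum fun j _ => Nat.one_le_iff_ne_zero.2 (hc0 j)
      _ = ∑ i, ∑ j, c j i := sum_comm
      _ = ∑ i, (∑ j, c j) i := by simp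

lemma Generates.ordS_dotProduct_eq (hgen : Generates S g) (hg : ∀ i, 0 < g i) {lam : Fin ν → ℕ}
    (hmax : ∀ ρ : Fin ν → ℕ, ρ ⬝ᵥ g = lam ⬝ᵥ g → ∑ i, ρ i ≤ ∑ i, lam i) :
    ordS S (lam ⬝ᵥ g) = ∑ i, lam i := by
  have hmem := dotProduct_mem_lengthSet hgen.apply_mem hg lam
  rw [ordS_eq_sSup_lengthSet]
  refine le_antisymm (csSup_le' fun h hh => ?_)
    (le_csSup ⟨_, fun _ => le_of_mem_lengthSet⟩ hmem)
  obtain ⟨ρ, hρ, hle⟩ := hgen.exists_rep_of_mem_lengthSet hh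
  exact hle.trans (hmax ρ hρ)

lemma IsLexMaxRep.ordS_eq_and_uniqueMaxRep (hgen : MinimalGen S g) {k : Fin ν} {h : ℕ}
    (hlex : IsLexMaxRep g (h * g k) (Pi.single k h)) :
    ordS S (h * g k) = h ∧ UniqueMaxRep S g (h * g k) := by
  have hsingle : Pi.single k h ⬝ᵥ g = h * g k := single_dotProduct g h k
  have hord : ordS S (h * g k) = h := by
    have := hgen.1.ordS_dotProduct_eq hgen.pos fun ρ hρ => hlex.sum_le (hρ.trans hsingle)
    simpa [hsingle] using this
  refine ⟨hord, Pi.single k h, ⟨hsingle, by simp [hord]⟩, fun σ ⟨hσg, hσs⟩ => ?_⟩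
  rw [hord] at hσs
  by_contra hne
  have hlt := mul_sq_lt_dotProduct_sq hgen.injective hσg hσs hne
  rcases Prod.Lex.toLex_le_toLex.1 (hlex.2 σ hσg) with hsum | ⟨_, hsq⟩
  · simp [hσs] at hsum
  · simp only [single_dotProduct] at hsq
    omega

end Generators

section Apery

variable {S : Set ℕ}

lemma InApery.of_add (hadd : ∀ a ∈ S, ∀ b ∈ S, a + b ∈ S) {m a b : ℕ}
    (h : InApery S m (a + b)) (ha : a ∈ S) (hb : b ∈ S) : InApery S m a :=
  ⟨ha, fun u hu hum => h.2 (u + b) (hadd u hu b hb) (by omega)⟩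

lemma bddAbove_aperySet (hS : IsNumSgp S) (m : ℕ) : BddAbove (AperySet S m) := by
  obtain ⟨N, hN⟩ := hS.2.2.bddAbove
  refine ⟨N + m, fun x hx => ?_⟩
  by_contra! hlt
  have hxm : x - m ∈ S := by
    by_contra hnot
    have := hN hnot
    omega
  exact hx.2 (x - m) hxm (by omega)

lemma le_gammaN (hS : IsNumSgp S) {ν : ℕ} {g : Fin ν → ℕ} {m h : ℕ} {k : Fin ν}
    (hgk : 0 < g k) (hA : InApery S m (h * g k)) (hord : ordS S (h * g k) = h)
    (huniq : UniqueMaxRep S g (h * g k)) : h ≤ gammaN S m g k := by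
  obtain ⟨N, hN⟩ := bddAbove_aperySet hS m
  refine le_csSup ⟨N, fun h' hh' => ?_⟩ ⟨hA, hord, huniq⟩
  exact (Nat.le_mul_of_pos_right h' hgk).trans (hN hh'.1)

lemma gammaN_self_eq_zero {ν : ℕ} {g : Fin ν → ℕ} (hgen : Generates S g) (i : Fin ν) :
    gammaN S (g i) g i = 0 := by
  refine Nat.le_zero.1 (csSup_le' fun h hh => ?_)
  by_contra hpos
  obtain ⟨n, rfl⟩ := Nat.exists_eq_add_one_of_ne_zero (by omega : h ≠ 0)
  exact hh.1.2 (n * g i) (by simpa using hgen.mem (Pi.single i n)) (by ring)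

end Apery

lemma sum_le_sum_gammaN_of_dotProduct_eq {S : Set ℕ} {ν : ℕ} [NeZero ν] {g : Fin ν → ℕ}
    (hS : IsNumSgp S) (hgen : MinimalGen S g) (hrect : AperySet S (g 0) = GammaSet S (g 0) g)
    {ρ : Fin ν → ℕ} (hρ : ρ ⬝ᵥ g = gammaN S (g 0) g ⬝ᵥ g) :
    ∑ i, ρ i ≤ ∑ i, gammaN S (g 0) g i := by
  set γ := gammaN S (g 0) g
  have hM : InApery S (g 0) (γ ⬝ᵥ g) := by
    change γ ⬝ᵥ g ∈ AperySet S (g 0)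
    rw [hrect]
    exact ⟨γ, gammaN_self_eq_zero hgen.1 0, fun _ => le_rfl, rfl⟩
  obtain ⟨μ, hμ⟩ := exists_isLexMaxRep hgen.pos γ
  have hμγ : ∀ k, μ k ≤ γ k := by
    intro k
    have hsplit : Function.update μ k 0 + Pi.single k (μ k) = μ := by
      ext i
      by_cases hik : i = k <;> simp [hik]
    have hlex := (hsplit ▸ hμ).of_add
    rw [single_dotProduct] at hlex
    obtain ⟨hord, huniq⟩ := hlex.ordS_eq_and_uniqueMaxRep hgen
    have hA : InApery S (g 0) (μ k * g k) := by
      refine InApery.of_add hS.2.1 (b := Function.update μ k 0 ⬝ᵥ g) ?_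
        (by simpa using hgen.1.mem (Pi.single k (μ k))) (hgen.1.mem _)
      rwa [← single_dotProduct, add_comm, ← add_dotProduct, hsplit, hμ.1]
    exact le_gammaN hS (hgen.pos k) hA hord huniq
  calc ∑ i, ρ i ≤ ∑ i, μ i := hμ.sum_le hρ
    _ ≤ ∑ i, γ i := sum_le_sum fun k _ => hμγ k

theorem gammaRect_rep_is_maximal_general (S : Set ℕ) {ν : ℕ} [NeZero ν] (g : Fin ν → ℕ)
    (hS : IsNumSgp S) (hgen : MinimalGen S g)
    (hrect : AperySet S (g 0) = GammaSet S (g 0) g)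
    (ω : ℕ) (lam : Fin ν → ℕ)
    (hle : ∀ i, lam i ≤ gammaN S (g 0) g i) (hrep : ∑ i, lam i * g i = ω) :
    ∑ i, lam i = ordS S ω := by
  set γ := gammaN S (g 0) g
  have hpad : lam + (γ - lam) = γ := add_tsub_cancel_of_le hle
  have hsum : ∑ i, γ i = ∑ i, lam i + ∑ i, (γ - lam) i := by
    rw [← sum_add_distrib]
    exact sum_congr rfl fun i _ => (congrFun hpad i).symm
  rw [← hrep]
  refine (hgen.1.ordS_dotProduct_eq (lam := lam) hgen.pos fun ρ hρ => ?_).symm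
  have hbound : ∑ i, (ρ + (γ - lam)) i ≤ ∑ i, γ i :=
    sum_le_sum_gammaN_of_dotProduct_eq hS hgen hrect
      (by rw [add_dotProduct, hρ, ← add_dotProduct, hpad])
  rw [hsum] at hbound
  simp only [Pi.add_apply, sum_add_distrib] at hbound
  omega

theorem gammaRect_rep_is_maximal (S : Set ℕ) {ν : ℕ} [NeZero ν] (g : Fin ν → ℕ) (hν : 2 ≤ ν)
    (hS : IsNumSgp S) (hgen : MinimalGen S g) (hmono : StrictMono g)
    (hmpos : 0 < g 0) (hmul : ∀ s ∈ S, s ≠ 0 → g 0 ≤ s)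
    (hrect : AperySet S (g 0) = GammaSet S (g 0) g)
    (ω : ℕ) (hω : InApery S (g 0) ω) (lam : Fin ν → ℕ) (hlam0 : lam 0 = 0)
    (hle : ∀ i, lam i ≤ gammaN S (g 0) g i) (hrep : ∑ i, lam i * g i = ω) :
    ∑ i, lam i = ordS S ω :=
  gammaRect_rep_is_maximal_general S g hS hgen hrect ω lam hle hrep
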